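/- For a finite point set P in R^d with distinct pairwise distances, the finite death times in the 0-dimensional persistence diagram of the Rips filtration are exactly the lengths of the n−1 edges of the Euclidean minimum spanning tree of P, with multiplicity. -/

import Mathlib

/-!
A pair `u ≠ v` produces the death time `|uv|` exactly when `u` and `v` are not connected by
edges shorter than `|uv|`. For an MST edge `uv` this is the cut property: a shorter edge
joining the two components of `G - uv` could replace `uv` and give a lighter spanning tree.
For a pair `uv` outside the MST it is the cycle property: every edge `xy` on the tree path
from `u` to `v` has `|xy| ≤ |uv|`, since otherwise trading `xy` for `uv` would again lighten
the tree, and distinct distances make this strict, so that path connects `u` and `v` below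
`|uv|`. Distinct distances also make the edge length injective on the `n - 1` tree edges.
-/

open SimpleGraph

/-- Total weight of a graph in a finite metric space: sum of distances over edges. -/
noncomputable def graphWeight {V : Type*} [Finite V] [MetricSpace V] (G : SimpleGraph V) : ℝ :=
  ∑ e ∈ G.edgeSet.toFinite.toFinset,
    Sym2.lift ⟨fun u v => dist u v, fun u v => dist_comm u v⟩ e

/-- `G` is a minimum spanning tree of the complete distance-weighted graph on `V`. -/
def IsMST {V : Type*} [Finite V] [MetricSpace V] (G : SimpleGraph V) : Prop :=
  G.IsTree ∧ ∀ T : SimpleGraph V, T.IsTree → graphWeight G ≤ graphWeight T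

/-- All pairwise distances are distinct. -/
def DistinctDists (V : Type*) [MetricSpace V] : Prop :=
  ∀ u v x y : V, u ≠ v → x ≠ y → dist u v = dist x y → s(u, v) = s(x, y)

/-- Rips graph at threshold `δ`: edges between distinct points at distance `≤ δ`. -/
def ripsGraph (V : Type*) [MetricSpace V] (δ : ℝ) : SimpleGraph V where
  Adj u v := u ≠ v ∧ dist u v ≤ δ
  symm := ⟨fun u v h => ⟨h.1.symm, dist_comm u v ▸ h.2⟩⟩
  loopless := ⟨fun u h => h.1 rfl⟩

/-- Graph with edges strictly shorter than `δ` (the Rips complex just before `δ`). -/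
def ripsGraphLt (V : Type*) [MetricSpace V] (δ : ℝ) : SimpleGraph V where
  Adj u v := u ≠ v ∧ dist u v < δ
  symm := ⟨fun u v h => ⟨h.1.symm, dist_comm u v ▸ h.2⟩⟩
  loopless := ⟨fun u h => h.1 rfl⟩

/-- `C` is a connected component of the Rips complex at threshold `δ`. -/
def IsComponentAt {V : Type*} [MetricSpace V] (δ : ℝ) (C : Set V) : Prop :=
  ∃ v : V, C = {u | (ripsGraph V δ).Reachable v u}

/-- `C` appears as a connected component at some stage of the Rips filtration. -/
def Appears {V : Type*} [MetricSpace V] (C : Set V) : Prop :=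
  ∃ δ : ℝ, IsComponentAt δ C

namespace SimpleGraph

variable {V : Type*} {G : SimpleGraph V}

lemma Connected.reachable_deleteEdges_or (hG : G.Connected) (x y w : V) :
    (G.deleteEdges {s(x, y)}).Reachable w x ∨ (G.deleteEdges {s(x, y)}).Reachable w y := by
  by_contra! h
  obtain ⟨d, -, hfst, hsnd⟩ := (hG w x).some.exists_boundary_dart
    {z | (G.deleteEdges {s(x, y)}).Reachable w z} (Reachable.refl w) h.1
  have hcut : s(d.fst, d.snd) = s(x, y) := by
    by_contra hne
    exact hsnd (hfst.trans (deleteEdges_adj.2 ⟨d.adj, hne⟩).reachable)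
  rcases Sym2.eq_iff.1 hcut with ⟨hx, -⟩ | ⟨hy, -⟩
  · exact h.1 (hx ▸ hfst)
  · exact h.2 (hy ▸ hfst)

lemma IsTree.not_reachable_deleteEdges (hG : G.IsTree) {x y : V} (hxy : G.Adj x y) :
    ¬ (G.deleteEdges {s(x, y)}).Reachable x y :=
  isBridge_iff.1 (isAcyclic_iff_forall_adj_isBridge.1 hG.isAcyclic hxy)

lemma Walk.IsPath.reachable_sup_edge_deleteEdges {u v x y : V} {p : G.Walk u v} (hp : p.IsPath)
    (huv : ¬ G.Adj u v) (hne : u ≠ v) (hxy : s(x, y) ∈ p.edges) :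
    ((G ⊔ edge u v).deleteEdges {s(x, y)}).Reachable x y := by
  have hvu : (G ⊔ edge u v).Adj v u := Or.inr ((adj_edge _ _).2 ⟨Sym2.eq_swap, hne.symm⟩)
  -- `p` closed up by the new edge `vu` is a cycle through `xy`
  have hcycle : (Walk.cons hvu (p.mapLe le_sup_left)).IsCycle := by
    rw [Walk.cons_isCycle_iff, Walk.edges_mapLe_eq_edges]
    exact ⟨(Walk.isPath_mapLe _).2 hp, fun h => huv (p.adj_of_mem_edges h).symm⟩
  refine (adj_and_reachable_delete_edges_iff_exists_cycle.2 ⟨v, _, hcycle, ?_⟩).2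
  simp [hxy]

lemma IsTree.ncard_edgeSet_add_one [Finite V] (hG : G.IsTree) :
    G.edgeSet.ncard + 1 = Nat.card V := by
  have := Fintype.ofFinite V
  classical
  rw [Set.ncard_eq_toFinset_card', ← edgeFinset, hG.card_edgeFinset, Nat.card_eq_fintype_card]

end SimpleGraph

section MinimumSpanningTree

variable {V : Type*} [MetricSpace V] {G : SimpleGraph V}

noncomputable def edgeLength : Sym2 V → ℝ :=
  Sym2.lift ⟨fun u v => dist u v, fun u v => dist_comm u v⟩

@[simp] lemma edgeLength_mk (u v : V) : edgeLength s(u, v) = dist u v := rfl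

lemma edgeLength_nonneg (e : Sym2 V) : 0 ≤ edgeLength e := by
  induction e using Sym2.ind with
  | _ u v => exact dist_nonneg

lemma DistinctDists.injOn_edgeLength (hd : DistinctDists V) (G : SimpleGraph V) :
    Set.InjOn edgeLength G.edgeSet := by
  intro e he e' he' h
  induction e using Sym2.ind
  induction e' using Sym2.ind
  exact hd _ _ _ _ (G.ne_of_adj he) (G.ne_of_adj he') h

section Finite

variable [Finite V]

lemma graphWeight_eq_sum (G : SimpleGraph V) :
    graphWeight G = ∑ e ∈ G.edgeSet.toFinite.toFinset, edgeLength e :=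
  rfl

lemma graphWeight_mono {H : SimpleGraph V} (h : G ≤ H) : graphWeight G ≤ graphWeight H :=
  Finset.sum_le_sum_of_subset_of_nonneg (Set.Finite.toFinset_subset_toFinset.2 (edgeSet_mono h))
    fun e _ _ => edgeLength_nonneg e

lemma graphWeight_deleteEdges_add {e : Sym2 V} (he : e ∈ G.edgeSet) :
    graphWeight (G.deleteEdges {e}) + edgeLength e = graphWeight G := by
  classical
  have hedges : (G.deleteEdges {e}).edgeSet.toFinite.toFinset =
      G.edgeSet.toFinite.toFinset.erase e := by
    ext
    simp [and_comm]
  rw [graphWeight_eq_sum, graphWeight_eq_sum, hedges, Finset.sum_erase_add _ _ (by simpa)]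

lemma graphWeight_sup_edge_le (c d : V) :
    graphWeight (G ⊔ edge c d) ≤ graphWeight G + dist c d := by
  classical
  set S := G.edgeSet.toFinite.toFinset
  have hedges : (G ⊔ edge c d).edgeSet.toFinite.toFinset ⊆ insert s(c, d) S := by
    intro e
    simp only [Set.Finite.mem_toFinset, edgeSet_sup, edgeSet_edge, Finset.mem_insert, S]
    rintro (h | ⟨h, -⟩)
    exacts [Or.inr h, Or.inl h]
  calc graphWeight (G ⊔ edge c d) ≤ ∑ e ∈ insert s(c, d) S, edgeLength e :=
        Finset.sum_le_sum_of_subset_of_nonneg hedges fun e _ _ => edgeLength_nonneg e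
    _ ≤ graphWeight G + dist c d := by
        by_cases h : s(c, d) ∈ S
        · rw [Finset.insert_eq_of_mem h, graphWeight_eq_sum]
          linarith [dist_nonneg (x := c) (y := d)]
        · rw [Finset.sum_insert h, graphWeight_eq_sum, edgeLength_mk, add_comm]

/-- Exchange argument: `G - ab + cd` is still connected, so one of its spanning trees weighs at
most `w(G) - |ab| + |cd|`. -/
lemma IsMST.dist_le_of_reachable_sup_edge (hG : IsMST G) {a b c d : V} (hab : G.Adj a b)
    (hreach : ((G ⊔ edge c d).deleteEdges {s(a, b)}).Reachable a b) : dist a b ≤ dist c d := by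
  set T := (G ⊔ edge c d).deleteEdges {s(a, b)}
  have hGT : G.deleteEdges {s(a, b)} ≤ T := deleteEdges_mono le_sup_left
  have hT : T.Connected := by
    have hto_a (w : V) : T.Reachable w a :=
      (hG.1.connected.reachable_deleteEdges_or a b w).elim (·.mono hGT)
        fun h => (h.mono hGT).trans hreach.symm
    exact (connected_iff T).2
      ⟨fun u w => (hto_a u).trans (hto_a w).symm, hG.1.connected.nonempty⟩
  obtain ⟨T', hT'T, hT'⟩ := hT.exists_isTree_le
  have hweight : graphWeight G ≤ graphWeight G + dist c d - dist a b :=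
    calc graphWeight G ≤ graphWeight T' := hG.2 T' hT'
      _ ≤ graphWeight T := graphWeight_mono hT'T
      _ = graphWeight (G ⊔ edge c d) - dist a b :=
        eq_sub_of_add_eq (graphWeight_deleteEdges_add (Or.inl hab))
      _ ≤ graphWeight G + dist c d - dist a b := by
        linarith [graphWeight_sup_edge_le (G := G) c d]
  linarith

lemma IsMST.not_reachable_ripsGraphLt (hG : IsMST G) {u v : V} (huv : G.Adj u v) :
    ¬ (ripsGraphLt V (dist u v)).Reachable u v := by
  rintro ⟨q⟩
  set H := G.deleteEdges {s(u, v)}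
  obtain ⟨⟨⟨x, y⟩, hxy⟩, -, hux, hnuy⟩ := q.exists_boundary_dart {w | H.Reachable u w}
    (Reachable.refl u) (hG.1.not_reachable_deleteEdges huv)
  have hyv : H.Reachable y v := (hG.1.connected.reachable_deleteEdges_or u v y).resolve_left
    fun h => hnuy h.symm
  have hshort : dist x y < dist u v := hxy.2
  have hHle : H ≤ (G ⊔ edge x y).deleteEdges {s(u, v)} := deleteEdges_mono le_sup_left
  have hcross : ((G ⊔ edge x y).deleteEdges {s(u, v)}).Adj x y := by
    refine deleteEdges_adj.2 ⟨Or.inr ((adj_edge _ _).2 ⟨rfl, hxy.1⟩), fun h => hshort.ne ?_⟩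
    exact congrArg edgeLength (Set.mem_singleton_iff.1 h)
  have hreach : ((G ⊔ edge x y).deleteEdges {s(u, v)}).Reachable u v :=
    (hux.mono hHle).trans (hcross.reachable.trans (hyv.mono hHle))
  exact (hG.dist_le_of_reachable_sup_edge huv hreach).not_gt hshort

lemma IsMST.reachable_ripsGraphLt (hd : DistinctDists V) (hG : IsMST G) {u v : V} (hne : u ≠ v)
    (huv : ¬ G.Adj u v) : (ripsGraphLt V (dist u v)).Reachable u v := by
  obtain ⟨p, hp⟩ := (hG.1.connected u v).exists_isPath
  refine ⟨p.transfer _ fun e he => ?_⟩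
  induction e using Sym2.ind with
  | _ x y =>
    have hxy : G.Adj x y := p.adj_of_mem_edges he
    have hle := hG.dist_le_of_reachable_sup_edge hxy (hp.reachable_sup_edge_deleteEdges huv hne he)
    have hne' : dist x y ≠ dist u v := fun h =>
      huv (G.mem_edgeSet.1 (hd x y u v hxy.ne hne h ▸ G.mem_edgeSet.2 hxy))
    exact ⟨hxy.ne, lt_of_le_of_ne hle hne'⟩

theorem IsMST.adj_iff_not_reachable_ripsGraphLt (hd : DistinctDists V) (hG : IsMST G) {u v : V}
    (hne : u ≠ v) : G.Adj u v ↔ ¬ (ripsGraphLt V (dist u v)).Reachable u v :=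
  ⟨hG.not_reachable_ripsGraphLt, not_imp_comm.1 (hG.reachable_ripsGraphLt hd hne)⟩

theorem IsMST.deathTimes_eq_image_edgeLength (hd : DistinctDists V) (hG : IsMST G) :
    {δ : ℝ | ∃ u v : V, u ≠ v ∧ dist u v = δ ∧ ¬ (ripsGraphLt V δ).Reachable u v} =
      edgeLength '' G.edgeSet := by
  ext δ
  constructor
  · rintro ⟨u, v, hne, rfl, h⟩
    exact ⟨s(u, v), (hG.adj_iff_not_reachable_ripsGraphLt hd hne).2 h, rfl⟩
  · rintro ⟨e, he, rfl⟩
    induction e using Sym2.ind with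
    | _ u v => exact ⟨u, v, G.ne_of_adj he, rfl, hG.not_reachable_ripsGraphLt he⟩

end Finite

end MinimumSpanningTree

theorem stmt9_general {d : ℕ} (P : Finset (EuclideanSpace ℝ (Fin d)))
    (hP : DistinctDists ↥P)
    (G : SimpleGraph ↥P) (hG : IsMST G) :
    {δ : ℝ | ∃ u v : ↥P, u ≠ v ∧ dist u v = δ ∧
        ¬ (ripsGraphLt ↥P δ).Reachable u v}
      = (Sym2.lift ⟨fun (u v : ↥P) => dist u v, fun u v => dist_comm u v⟩) '' G.edgeSet
    ∧ G.edgeSet.ncard = P.card - 1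
    ∧ {δ : ℝ | ∃ u v : ↥P, u ≠ v ∧ dist u v = δ ∧
        ¬ (ripsGraphLt ↥P δ).Reachable u v}.ncard = P.card - 1 := by
  have hdeaths := hG.deathTimes_eq_image_edgeLength hP
  have hedges : G.edgeSet.ncard = P.card - 1 := by
    have := hG.1.ncard_edgeSet_add_one
    rw [Nat.card_eq_fintype_card, Fintype.card_coe] at this
    omega
  refine ⟨hdeaths, hedges, ?_⟩
  rw [hdeaths, (hP.injOn_edgeLength G).ncard_image, hedges]

/-- For a finite point set `P` in `ℝ^d` (with `n ≥ 2` points and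
distinct pairwise distances), the finite death times in the 0-dimensional persistence
diagram of the Rips filtration — the thresholds at which two previously disconnected
components merge — are exactly the lengths of the `n − 1` edges of the Euclidean
minimum spanning tree of `P`; both collections consist of `n − 1` distinct values, so
they agree with multiplicity. -/
theorem stmt9 {d : ℕ} (P : Finset (EuclideanSpace ℝ (Fin d)))
    (hcard : 2 ≤ P.card) (hP : DistinctDists ↥P)
    (G : SimpleGraph ↥P) (hG : IsMST G) :
    {δ : ℝ | ∃ u v : ↥P, u ≠ v ∧ dist u v = δ ∧
        ¬ (ripsGraphLt ↥P δ).Reachable u v}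
      = (Sym2.lift ⟨fun (u v : ↥P) => dist u v, fun u v => dist_comm u v⟩) '' G.edgeSet
    ∧ G.edgeSet.ncard = P.card - 1
    ∧ {δ : ℝ | ∃ u v : ↥P, u ≠ v ∧ dist u v = δ ∧
        ¬ (ripsGraphLt ↥P δ).Reachable u v}.ncard = P.card - 1 :=
  stmt9_general P hP G hG
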